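/- There exist universal constants c₁ > 0 and c₂ > 0 such that for all real numbers μ₁, μ₂ with 0 < μ₁ ≤ μ₂, the Kullback–Leibler divergence between the Poisson distribution with mean μ₁ and the Poisson distribution with mean μ₂ satisfies c₁·d(μ₁,μ₂) ≤ KL(Poisson(μ₁), Poisson(μ₂)) ≤ c₂·d(μ₁,μ₂), where d(μ₁,μ₂) := (μ₂ − μ₁)²/μ₂. -/

import Mathlib

/-!
The log-likelihood ratio `log (p₁(n) / p₂(n)) = μ₂ - μ₁ + n log (μ₁ / μ₂)` is affine in `n`, so
with total mass `1` and mean `μ₁` the series collapses to `KL = μ₂ - μ₁ - μ₁ log (μ₂ / μ₁)`.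
With `t = μ₂ / μ₁ ≥ 1`, the bounds `d/2 ≤ KL ≤ d` are then the elementary inequalities
`1 - 1/t ≤ log t ≤ (t - 1/t) / 2`, the second being `x ≤ sinh x` at `x = log t`.
-/

open Real

/-- The probability mass function of the Poisson distribution with mean `μ`:
`P[N = n] = e^{-μ} μⁿ / n!`. -/
noncomputable def poissonPDF (μ : ℝ) (n : ℕ) : ℝ :=
  Real.exp (-μ) * μ ^ n / (Nat.factorial n : ℝ)

/-- The Kullback–Leibler divergence `KL(Poisson(μ₁), Poisson(μ₂))`, written as the series
`∑ₙ p₁(n) · log (p₁(n)/p₂(n))` over the Poisson pmfs. -/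
noncomputable def poissonKL (μ₁ μ₂ : ℝ) : ℝ :=
  ∑' n : ℕ, poissonPDF μ₁ n * Real.log (poissonPDF μ₁ n / poissonPDF μ₂ n)

lemma hasSum_poissonPDF (μ : ℝ) : HasSum (poissonPDF μ) 1 := by
  have h := (NormedSpace.expSeries_div_hasSum_exp μ).mul_left (exp (-μ))
  rw [← exp_eq_exp_ℝ, ← exp_add, neg_add_cancel, exp_zero] at h
  exact h.congr_fun fun n ↦ mul_div_assoc _ _ _

lemma succ_mul_poissonPDF_succ (μ : ℝ) (n : ℕ) :
    (n + 1 : ℝ) * poissonPDF μ (n + 1) = μ * poissonPDF μ n := by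
  simp only [poissonPDF, Nat.factorial_succ, Nat.cast_mul, Nat.cast_succ, pow_succ]
  field_simp

lemma hasSum_mul_poissonPDF (μ : ℝ) : HasSum (fun n : ℕ ↦ n * poissonPDF μ n) μ := by
  rw [← hasSum_nat_add_iff' 1]
  simpa [succ_mul_poissonPDF_succ] using (hasSum_poissonPDF μ).mul_left μ

lemma log_poissonPDF_div {μ₁ μ₂ : ℝ} (h₁ : 0 < μ₁) (h₂ : 0 < μ₂) (n : ℕ) :
    log (poissonPDF μ₁ n / poissonPDF μ₂ n) = μ₂ - μ₁ + n * log (μ₁ / μ₂) := by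
  have hexp : poissonPDF μ₁ n / poissonPDF μ₂ n = exp (μ₂ - μ₁) * (μ₁ / μ₂) ^ n := by
    simp only [poissonPDF, div_pow, sub_eq_add_neg, exp_add, exp_neg]
    field_simp
  rw [hexp, log_mul (exp_pos _).ne' (by positivity), log_exp, Real.log_pow]

theorem poissonKL_eq {μ₁ μ₂ : ℝ} (h₁ : 0 < μ₁) (h₂ : 0 < μ₂) :
    poissonKL μ₁ μ₂ = μ₂ - μ₁ - μ₁ * log (μ₂ / μ₁) := by
  have h := ((hasSum_poissonPDF μ₁).mul_left (μ₂ - μ₁)).add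
    ((hasSum_mul_poissonPDF μ₁).mul_left (log (μ₁ / μ₂)))
  have hlim : μ₂ - μ₁ - μ₁ * log (μ₂ / μ₁) = (μ₂ - μ₁) * 1 + log (μ₁ / μ₂) * μ₁ := by
    rw [← inv_div, log_inv]
    ring
  rw [poissonKL, hlim, ← h.tsum_eq]
  refine tsum_congr fun n ↦ ?_
  rw [log_poissonPDF_div h₁ h₂]
  ring

lemma log_le_sub_inv_div_two {x : ℝ} (hx : 1 ≤ x) : log x ≤ (x - x⁻¹) / 2 := by
  rw [← sinh_log (by positivity)]
  exact self_le_sinh_iff.mpr (log_nonneg hx)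

theorem poissonKL_le {μ₁ μ₂ : ℝ} (h₁ : 0 < μ₁) (h₂ : 0 < μ₂) :
    poissonKL μ₁ μ₂ ≤ (μ₂ - μ₁) ^ 2 / μ₂ := by
  have hlog := one_sub_inv_le_log_of_pos (div_pos h₂ h₁)
  rw [inv_div] at hlog
  have := mul_le_mul_of_nonneg_left hlog h₁.le
  calc poissonKL μ₁ μ₂ ≤ μ₂ - μ₁ - μ₁ * (1 - μ₁ / μ₂) := by rw [poissonKL_eq h₁ h₂]; linarith
    _ = (μ₂ - μ₁) ^ 2 / μ₂ := by field_simp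

theorem half_le_poissonKL {μ₁ μ₂ : ℝ} (h₁ : 0 < μ₁) (h : μ₁ ≤ μ₂) :
    (μ₂ - μ₁) ^ 2 / μ₂ / 2 ≤ poissonKL μ₁ μ₂ := by
  have h₂ := h₁.trans_le h
  have hlog := log_le_sub_inv_div_two ((one_le_div h₁).mpr h)
  rw [inv_div] at hlog
  have := mul_le_mul_of_nonneg_left hlog h₁.le
  calc (μ₂ - μ₁) ^ 2 / μ₂ / 2 = μ₂ - μ₁ - μ₁ * ((μ₂ / μ₁ - μ₁ / μ₂) / 2) := by field_simp; ring
    _ ≤ poissonKL μ₁ μ₂ := by rw [poissonKL_eq h₁ h₂]; linarith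

theorem poissonKL_div_comparable :
    ∃ c₁ c₂ : ℝ, 0 < c₁ ∧ 0 < c₂ ∧
      ∀ μ₁ μ₂ : ℝ, 0 < μ₁ → μ₁ ≤ μ₂ →
        c₁ * ((μ₂ - μ₁) ^ 2 / μ₂) ≤ poissonKL μ₁ μ₂ ∧
        poissonKL μ₁ μ₂ ≤ c₂ * ((μ₂ - μ₁) ^ 2 / μ₂) := by
  refine ⟨1 / 2, 1, by norm_num, one_pos, fun μ₁ μ₂ h₁ h ↦ ⟨?_, ?_⟩⟩
  · simpa [div_eq_inv_mul, mul_comm] using half_le_poissonKL h₁ h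
  · simpa using poissonKL_le h₁ (h₁.trans_le h)
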